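/- Let 𝓕 be the exponential distance matrix of K_{s,t}, with q a nonzero indeterminate satisfying q ≠ ±1 and q²(s−1)(t−1) ≠ 1. Then 𝓕 is invertible and 𝓕⁻¹ = (q / ((1−q²)(1 − q²(s−1)(t−1)))) · [[q(t−1)J_s, −J_{s×t}],[−J_{t×s}, q(s−1)J_t]] + (1/(1−q²)) I_{s+t}. -/

import Mathlib

/-!
In block form the exponential distance matrix of `K_{V,W}` only involves identity and all-ones
blocks, and `J_{l×m} * J_{m×n} = |m| • J_{l×n}`. Multiplying it by the claimed inverse therefore
reduces, block by block, to four scalar identities in `q`, `|V|` and `|W|`.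
-/

/-- The exponential distance matrix of a connected graph `G`:
the `(u,v)` entry is `q ^ d(u,v)`. -/
noncomputable def expDistMatrix {V : Type*} (G : SimpleGraph V) (q : ℝ) : Matrix V V ℝ :=
  Matrix.of fun u v => q ^ (G.dist u v)

open Matrix

namespace SimpleGraph

variable {V W : Type*}

lemma dist_eq_two_of_mem_commonNeighbors {G : SimpleGraph V} {u v w : V} (hne : u ≠ v)
    (hnadj : ¬G.Adj u v) (hw : w ∈ G.commonNeighbors u v) : G.dist u v = 2 := by
  simp [dist, edist_eq_two_iff.mpr ⟨hne, hnadj, w, hw⟩]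

lemma completeBipartiteGraph_dist_inl_inr (v : V) (w : W) :
    (completeBipartiteGraph V W).dist (.inl v) (.inr w) = 1 :=
  dist_eq_one_iff_adj.mpr (by simp)

lemma completeBipartiteGraph_dist_inr_inl (w : W) (v : V) :
    (completeBipartiteGraph V W).dist (.inr w) (.inl v) = 1 :=
  dist_eq_one_iff_adj.mpr (by simp)

lemma completeBipartiteGraph_dist_inl_inl [Nonempty W] [DecidableEq V] (v v' : V) :
    (completeBipartiteGraph V W).dist (.inl v) (.inl v') = if v = v' then 0 else 2 := by
  split_ifs with h
  · simp [h]
  · obtain ⟨w⟩ := ‹Nonempty W›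
    exact dist_eq_two_of_mem_commonNeighbors (by simpa) (by simp) (w := .inr w) (by simp [mem_commonNeighbors])

lemma completeBipartiteGraph_dist_inr_inr [Nonempty V] [DecidableEq W] (w w' : W) :
    (completeBipartiteGraph V W).dist (.inr w) (.inr w') = if w = w' then 0 else 2 := by
  split_ifs with h
  · simp [h]
  · obtain ⟨v⟩ := ‹Nonempty V›
    exact dist_eq_two_of_mem_commonNeighbors (by simpa) (by simp) (w := .inl v) (by simp [mem_commonNeighbors])

end SimpleGraph

open SimpleGraph

namespace Matrix

variable {l m n R : Type*}

lemma of_one_mul_of_one [Fintype m] [NonAssocSemiring R] :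
    (of fun _ _ => 1 : Matrix l m R) * (of fun _ _ => 1 : Matrix m n R) =
      (Fintype.card m : R) • of fun _ _ => 1 := by
  ext i j
  simp [mul_apply]

end Matrix

variable {V W : Type*}

lemma expDistMatrix_completeBipartiteGraph [Nonempty V] [Nonempty W] [DecidableEq V]
    [DecidableEq W] (q : ℝ) :
    expDistMatrix (completeBipartiteGraph V W) q =
      fromBlocks ((1 - q ^ 2) • 1 + q ^ 2 • of fun _ _ => 1) (q • of fun _ _ => 1)
        (q • of fun _ _ => 1) ((1 - q ^ 2) • 1 + q ^ 2 • of fun _ _ => 1) := by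
  ext (v | w) (v' | w') <;>
    simp [expDistMatrix, completeBipartiteGraph_dist_inl_inl, completeBipartiteGraph_dist_inr_inr,
      completeBipartiteGraph_dist_inl_inr, completeBipartiteGraph_dist_inr_inl, one_apply] <;>
    split_ifs <;> ring

open Fintype in
noncomputable def completeBipartiteExpDistInv (V W : Type*) [Fintype V] [Fintype W] [DecidableEq V]
    [DecidableEq W] (q : ℝ) : Matrix (V ⊕ W) (V ⊕ W) ℝ :=
  (q / ((1 - q ^ 2) * (1 - q ^ 2 * ((card V : ℝ) - 1) * ((card W : ℝ) - 1)))) •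
      fromBlocks ((q * ((card W : ℝ) - 1)) • of fun _ _ => 1) (-of fun _ _ => 1)
        (-of fun _ _ => 1) ((q * ((card V : ℝ) - 1)) • of fun _ _ => 1)
    + (1 / (1 - q ^ 2)) • 1

open Fintype in
lemma expDistMatrix_completeBipartiteGraph_mul_inv [Fintype V] [Fintype W] [Nonempty V]
    [Nonempty W] [DecidableEq V] [DecidableEq W] {q : ℝ} (hq : q ^ 2 ≠ 1)
    (hVW : q ^ 2 * ((card V : ℝ) - 1) * ((card W : ℝ) - 1) ≠ 1) :
    expDistMatrix (completeBipartiteGraph V W) q * completeBipartiteExpDistInv V W q = 1 := by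
  have h₁ : 1 - q ^ 2 ≠ 0 := sub_ne_zero.mpr hq.symm
  have h₂ : 1 - q ^ 2 * ((card V : ℝ) - 1) * ((card W : ℝ) - 1) ≠ 0 := sub_ne_zero.mpr hVW.symm
  rw [expDistMatrix_completeBipartiteGraph, completeBipartiteExpDistInv, ← fromBlocks_one,
    fromBlocks_smul, fromBlocks_smul, fromBlocks_add, fromBlocks_multiply]
  simp only [Matrix.mul_add, Matrix.add_mul, Matrix.smul_mul, Matrix.mul_smul, Matrix.one_mul,
    Matrix.mul_one, Matrix.mul_neg, of_one_mul_of_one, smul_zero, add_zero]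
  congr 1 <;> ext i j <;> simp [one_apply]
  all_goals (try split_ifs) <;> field_simp <;> ring

theorem inv_expDistMatrix_completeBipartite_general (s t : ℕ) (hs : 0 < s) (ht : 0 < t)
    (q : ℝ) (hq1 : q ≠ 1) (hq1' : q ≠ -1)
    (hq2 : q ^ 2 * ((s : ℝ) - 1) * ((t : ℝ) - 1) ≠ 1) :
    IsUnit (expDistMatrix (completeBipartiteGraph (Fin s) (Fin t)) q)
    ∧ (expDistMatrix (completeBipartiteGraph (Fin s) (Fin t)) q)⁻¹
      = (q / ((1 - q ^ 2) * (1 - q ^ 2 * ((s : ℝ) - 1) * ((t : ℝ) - 1)))) •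
          Matrix.fromBlocks
            ((q * ((t : ℝ) - 1)) • (Matrix.of fun _ _ => (1 : ℝ)))
            (-(Matrix.of fun _ _ => (1 : ℝ)))
            (-(Matrix.of fun _ _ => (1 : ℝ)))
            ((q * ((s : ℝ) - 1)) • (Matrix.of fun _ _ => (1 : ℝ)))
        + (1 / (1 - q ^ 2)) • (1 : Matrix (Fin s ⊕ Fin t) (Fin s ⊕ Fin t) ℝ) := by
  have : Nonempty (Fin s) := Fin.pos_iff_nonempty.mp hs
  have : Nonempty (Fin t) := Fin.pos_iff_nonempty.mp ht
  have hq : q ^ 2 ≠ 1 := fun h => (sq_eq_one_iff.mp h).elim hq1 hq1'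
  have hinv := expDistMatrix_completeBipartiteGraph_mul_inv (V := Fin s) (W := Fin t) hq
    (by simpa only [Fintype.card_fin] using hq2)
  simp only [completeBipartiteExpDistInv, Fintype.card_fin] at hinv
  exact ⟨.of_mul_eq_one _ hinv, inv_eq_right_inv hinv⟩

/-- The inverse of the exponential distance matrix of `K_{s,t}`. -/
theorem inv_expDistMatrix_completeBipartite (s t : ℕ) (hs : 0 < s) (ht : 0 < t)
    (q : ℝ) (hq0 : q ≠ 0) (hq1 : q ≠ 1) (hq1' : q ≠ -1)
    (hq2 : q ^ 2 * ((s : ℝ) - 1) * ((t : ℝ) - 1) ≠ 1) :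
    IsUnit (expDistMatrix (completeBipartiteGraph (Fin s) (Fin t)) q)
    ∧ (expDistMatrix (completeBipartiteGraph (Fin s) (Fin t)) q)⁻¹
      = (q / ((1 - q ^ 2) * (1 - q ^ 2 * ((s : ℝ) - 1) * ((t : ℝ) - 1)))) •
          Matrix.fromBlocks
            ((q * ((t : ℝ) - 1)) • (Matrix.of fun _ _ => (1 : ℝ)))
            (-(Matrix.of fun _ _ => (1 : ℝ)))
            (-(Matrix.of fun _ _ => (1 : ℝ)))
            ((q * ((s : ℝ) - 1)) • (Matrix.of fun _ _ => (1 : ℝ)))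
        + (1 / (1 - q ^ 2)) • (1 : Matrix (Fin s ⊕ Fin t) (Fin s ⊕ Fin t) ℝ) :=
  inv_expDistMatrix_completeBipartite_general s t hs ht q hq1 hq1' hq2
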